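/- arXiv:1706.10079 — 6 statements merged into one kernel-verified Lean document; each statement's English description precedes it below -/
import Mathlib

section
/- Let K be a perfect field with algebraic closure K̄, let n ≥ 1 and set m = binomial(2n+1, n) − 1. Then there exists an injective group homomorphism ι : PGL_{n+1}(K̄) → GL_{m+1}(K̄) that is equivariant for the Galois actions: for every field automorphism σ of K̄ fixing K pointwise and every g ∈ PGL_{n+1}(K̄), one has ι(σ • g) = σ • ι(g), where σ acts on PGL_{n+1}(K̄) and on GL_{m+1}(K̄) by applying σ to each matrix entry. -/
open Matrix

/-- The entrywise action of a ring automorphism on the general linear group. -/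
def galGL {R : Type*} [CommRing R] (N : ℕ) (σ : R ≃+* R) :
    GL (Fin N) R →* GL (Fin N) R :=
  Units.map (σ.toRingHom.mapMatrix).toMonoidHom

/-!
`GL_{n+1}` acts on the traceless matrices `sl_{n+1}` by conjugation, and the kernel of this
adjoint representation is the centre (a matrix commuting with every `E_ij`, `i ≠ j`, is scalar),
so it induces a faithful representation of `PGL_{n+1}`. In the basis `E_ij` (`i ≠ j`),
`E_ii - E_00` (`i ≠ 0`) of `sl_{n+1}`, whose entries lie in `{0, 1, -1}`, the matrix of `Ad g` is
obtained from `g` and `g⁻¹` by ring operations alone, so it commutes with every ring automorphism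
applied entrywise. Finally `dim sl_{n+1} = (n+1)^2 - 1 ≤ n(2n+1) = C(2n+1, 2) ≤ C(2n+1, n)`, and
padding with an identity block embeds `GL(sl_{n+1})` equivariantly into `GL_{m+1}`.
-/

namespace Matrix

section Traceless

variable {ι R S : Type*} [DecidableEq ι] [CommRing R] [CommRing S] (i₀ : ι)

abbrev TracelessIndex := {p : ι × ι // p ≠ (i₀, i₀)}

variable (R) in
def tracelessBasis (q : ι × ι) : Matrix ι ι R :=
  single q.1 q.2 1 - if q.1 = q.2 then single i₀ i₀ 1 else 0

lemma tracelessBasis_apply_of_ne (q : ι × ι) {p : ι × ι} (hp : p ≠ (i₀, i₀)) :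
    tracelessBasis R i₀ q p.1 p.2 = if q = p then 1 else 0 := by
  obtain ⟨i, j⟩ := p
  obtain ⟨k, l⟩ := q
  have : ¬(i₀ = i ∧ i₀ = j) := by rintro ⟨rfl, rfl⟩; exact hp rfl
  by_cases hkl : k = l <;> simp [tracelessBasis, hkl, single_apply, this]

lemma tracelessBasis_map (φ : R →+* S) (q : ι × ι) :
    (tracelessBasis R i₀ q).map φ = tracelessBasis S i₀ q := by
  ext a b
  by_cases h : q.1 = q.2 <;> simp [tracelessBasis, single_apply, apply_ite φ, h]

variable [Fintype ι]

lemma trace_tracelessBasis (q : ι × ι) : (tracelessBasis R i₀ q).trace = 0 := by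
  obtain ⟨i, j⟩ := q
  by_cases h : i = j
  · subst h; simp [tracelessBasis]
  · simp [tracelessBasis, h, trace_single_eq_of_ne _ _ _ h]

lemma eq_of_trace_eq_zero_of_apply_eq {X Y : Matrix ι ι R} (hX : X.trace = 0) (hY : Y.trace = 0)
    (h : ∀ p : TracelessIndex i₀, X p.1.1 p.1.2 = Y p.1.1 p.1.2) : X = Y := by
  have hdiag : ∀ i ∈ Finset.univ.erase i₀, X i i = Y i i := fun i hi =>
    h ⟨(i, i), by simpa using Finset.ne_of_mem_erase hi⟩
  ext a b
  by_cases hab : (a, b) = (i₀, i₀)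
  · rw [(Prod.mk.inj hab).1, (Prod.mk.inj hab).2]
    have htrace (Z : Matrix ι ι R) : Z.trace = Z i₀ i₀ + ∑ i ∈ Finset.univ.erase i₀, Z i i :=
      (Finset.add_sum_erase _ _ (Finset.mem_univ i₀)).symm
    have hXY := hX.trans hY.symm
    rwa [htrace, htrace, Finset.sum_congr rfl hdiag, add_left_inj] at hXY
  · exact h ⟨(a, b), hab⟩

lemma sum_tracelessBasis {X : Matrix ι ι R} (hX : X.trace = 0) :
    ∑ q : TracelessIndex i₀, X q.1.1 q.1.2 • tracelessBasis R i₀ q.1 = X := by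
  refine eq_of_trace_eq_zero_of_apply_eq i₀ ?_ hX fun p => ?_
  · simp [trace_sum, trace_smul, trace_tracelessBasis]
  · simp [sum_apply, tracelessBasis_apply_of_ne i₀ _ p.2, ← Subtype.ext_iff]

-- The ascription `(g⁻¹ : GL ι R)` keeps `⁻¹` the group inverse rather than `Matrix.inv`.
def adMatrix (g : GL ι R) : Matrix (TracelessIndex i₀) (TracelessIndex i₀) R :=
  of fun p q => ((g : Matrix ι ι R) * tracelessBasis R i₀ q.1 * (g⁻¹ : GL ι R)) p.1.1 p.1.2

lemma conj_tracelessBasis_eq_sum (g : GL ι R) (q : TracelessIndex i₀) :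
    (g : Matrix ι ι R) * tracelessBasis R i₀ q.1 * (g⁻¹ : GL ι R) =
      ∑ r, adMatrix i₀ g r q • tracelessBasis R i₀ r.1 :=
  (sum_tracelessBasis i₀ (by rw [trace_units_conj, trace_tracelessBasis])).symm

lemma adMatrix_one : adMatrix i₀ (1 : GL ι R) = 1 := by
  ext p q
  simp [adMatrix, tracelessBasis_apply_of_ne i₀ _ p.2, one_apply, ← Subtype.ext_iff, eq_comm]

lemma adMatrix_mul (g h : GL ι R) : adMatrix i₀ (g * h) = adMatrix i₀ g * adMatrix i₀ h := by
  ext p q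
  have hconj : (g * h : GL ι R) * tracelessBasis R i₀ q.1 * ((g * h)⁻¹ : GL ι R) =
      ∑ r, adMatrix i₀ h r q • ((g : Matrix ι ι R) * tracelessBasis R i₀ r.1 * (g⁻¹ : GL ι R)) :=
    calc (g * h : GL ι R) * tracelessBasis R i₀ q.1 * ((g * h)⁻¹ : GL ι R)
        = (g : Matrix ι ι R) * (h * tracelessBasis R i₀ q.1 * (h⁻¹ : GL ι R)) *
            (g⁻¹ : GL ι R) := by
          simp only [_root_.mul_inv_rev, Units.val_mul, Matrix.mul_assoc]
      _ = _ := by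
          simp only [conj_tracelessBasis_eq_sum, Finset.mul_sum, Finset.sum_mul, Matrix.mul_smul,
            Matrix.smul_mul]
  simp only [adMatrix, of_apply] at hconj ⊢
  rw [hconj, sum_apply, mul_apply]
  simp [mul_comm]

def adRep : GL ι R →* GL (TracelessIndex i₀) R :=
  MonoidHom.toHomUnits
    { toFun := adMatrix i₀
      map_one' := adMatrix_one i₀
      map_mul' := adMatrix_mul i₀ }

lemma adMatrix_eq_one_iff (g : GL ι R) :
    adMatrix i₀ g = 1 ↔
      ∀ q : TracelessIndex i₀, Commute (g : Matrix ι ι R) (tracelessBasis R i₀ q.1) := by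
  simp only [Commute, SemiconjBy, ← Units.mul_inv_eq_iff_eq_mul]
  constructor
  · intro h q
    rw [conj_tracelessBasis_eq_sum, h]
    simp [one_apply]
  · intro h
    rw [← adMatrix_one i₀]
    ext p q
    simp only [adMatrix, of_apply, h, inv_one, Units.val_one, Matrix.one_mul, Matrix.mul_one]

lemma ker_adRep : (adRep (R := R) i₀).ker = Subgroup.center (GL ι R) := by
  ext g
  rw [MonoidHom.mem_ker, Units.ext_iff, GeneralLinearGroup.mem_center_iff_val_mem_range_scalar]
  refine (adMatrix_eq_one_iff i₀ g).trans ⟨fun h => ?_, ?_⟩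
  · refine mem_range_scalar_of_commute_single fun i j hij => (?_ : Commute _ _)
    have := h ⟨(i, j), fun h' => hij ((Prod.mk.inj h').1.trans (Prod.mk.inj h').2.symm)⟩
    simpa [tracelessBasis, hij] using this.symm
  · rintro ⟨c, hc⟩ q
    rw [← hc]
    exact scalar_commute c (fun r => Commute.all c r) _

lemma adMatrix_map (φ : R →+* S) (g : GL ι R) :
    adMatrix i₀ (Units.map φ.mapMatrix.toMonoidHom g) = (adMatrix i₀ g).map φ := by
  ext p q
  simp only [adMatrix, of_apply, ← map_inv, Units.coe_map, RingHom.toMonoidHom_eq_coe,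
    MonoidHom.coe_coe, RingHom.mapMatrix_apply]
  rw [← tracelessBasis_map i₀ φ, ← Matrix.map_mul, ← Matrix.map_mul]
  rfl

lemma adRep_map (φ : R →+* S) (g : GL ι R) :
    adRep i₀ (Units.map φ.mapMatrix.toMonoidHom g) =
      Units.map φ.mapMatrix.toMonoidHom (adRep i₀ g) :=
  Units.ext (adMatrix_map i₀ φ g)

lemma card_tracelessIndex : Fintype.card (TracelessIndex i₀) = Fintype.card ι ^ 2 - 1 := by
  rw [Fintype.card_subtype_compl, Fintype.card_subtype_eq, Fintype.card_prod, sq]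

end Traceless

section BlockEmbedding

variable {ι ι' κ R : Type*} [Fintype ι] [Fintype ι'] [Fintype κ] [DecidableEq ι] [DecidableEq ι']
  [DecidableEq κ] [CommRing R]

variable (ι' R) in
def fromBlocksOneHom : Matrix ι ι R →* Matrix (ι ⊕ ι') (ι ⊕ ι') R where
  toFun A := fromBlocks A 0 0 1
  map_one' := fromBlocks_one
  map_mul' A B := by simp [fromBlocks_multiply]

lemma fromBlocksOneHom_injective : Function.Injective (fromBlocksOneHom (ι := ι) ι' R) :=
  fun A B h => by simpa [fromBlocksOneHom] using congrArg toBlocks₁₁ h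

lemma exists_injective_hom_GL_of_card_le (h : Fintype.card ι ≤ Fintype.card κ) :
    ∃ f : GL ι R →* GL κ R, Function.Injective f ∧ ∀ (φ : R →+* R) (g : GL ι R),
      f (Units.map φ.mapMatrix.toMonoidHom g) = Units.map φ.mapMatrix.toMonoidHom (f g) := by
  let e : ι ⊕ Fin (Fintype.card κ - Fintype.card ι) ≃ κ :=
    Fintype.equivOfCardEq (by simp only [Fintype.card_sum, Fintype.card_fin]; omega)
  refine ⟨Units.map ((reindexAlgEquiv R R e).toMonoidHom.comp (fromBlocksOneHom _ R)),
    Units.map_injective ((reindexAlgEquiv R R e).injective.comp fromBlocksOneHom_injective),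
    fun φ g => Units.ext ?_⟩
  simp only [fromBlocksOneHom, Units.coe_map, MonoidHom.coe_comp, Function.comp_apply,
    RingHom.toMonoidHom_eq_coe, MonoidHom.coe_coe, RingHom.mapMatrix_apply, MonoidHom.coe_mk,
    OneHom.coe_mk]
  change reindex e e (fromBlocks ((g : Matrix ι ι R).map φ) 0 0 1) =
    (reindex e e (fromBlocks (g : Matrix ι ι R) 0 0 1)).map φ
  rw [reindex_apply, reindex_apply, ← submatrix_map, fromBlocks_map, Matrix.map_zero _ φ.map_zero,
    Matrix.map_zero _ φ.map_zero, Matrix.map_one _ φ.map_zero φ.map_one]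

end BlockEmbedding

end Matrix

lemma Nat.add_one_sq_sub_one_le_choose (n : ℕ) : (n + 1) ^ 2 - 1 ≤ (2 * n + 1).choose n := by
  have hmiddle : (2 * n + 1).choose 2 ≤ (2 * n + 1).choose n := by
    simpa [show (2 * n + 1) / 2 = n by omega] using Nat.choose_le_middle 2 (2 * n + 1)
  have htwo : (2 * n + 1).choose 2 = (2 * n + 1) * n := by
    rw [Nat.choose_two_right, Nat.add_sub_cancel, Nat.mul_div_assoc _ (by simp),
      Nat.mul_div_cancel_left _ two_pos]
  rw [htwo] at hmiddle
  have hsq : (n + 1) ^ 2 = n * n + 2 * n + 1 := by ring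
  rw [hsq, Nat.add_sub_cancel]
  nlinarith

theorem stmt0_general (K : Type*) [Field K] (n : ℕ) :
    ∃ ι : (GL (Fin (n + 1)) (AlgebraicClosure K) ⧸
            Subgroup.center (GL (Fin (n + 1)) (AlgebraicClosure K))) →*
          GL (Fin ((2 * n + 1).choose n - 1 + 1)) (AlgebraicClosure K),
      Function.Injective ι ∧
        ∀ (σ : AlgebraicClosure K ≃ₐ[K] AlgebraicClosure K)
          (g : GL (Fin (n + 1)) (AlgebraicClosure K)),
          ι (QuotientGroup.mk (galGL (n + 1) σ.toRingEquiv g)) =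
            galGL ((2 * n + 1).choose n - 1 + 1) σ.toRingEquiv
              (ι (QuotientGroup.mk g)) := by
  obtain ⟨f, hf_inj, hf_map⟩ := exists_injective_hom_GL_of_card_le
    (ι := TracelessIndex (0 : Fin (n + 1))) (κ := Fin ((2 * n + 1).choose n - 1 + 1))
    (R := AlgebraicClosure K) (by
      rw [card_tracelessIndex, Fintype.card_fin, Fintype.card_fin]
      have := Nat.add_one_sq_sub_one_le_choose n
      omega)
  refine ⟨f.comp (QuotientGroup.lift _ (adRep 0) (ker_adRep 0).ge),
    hf_inj.comp ((QuotientGroup.injective_lift_iff _ _ _).2 (ker_adRep 0).symm),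
    fun σ g => ?_⟩
  exact (congrArg f (adRep_map 0 _ g)).trans (hf_map _ _)

/-- for a perfect field `K` with algebraic closure `K̄` and `n ≥ 1`,
with `m = (2n+1).choose n - 1`, there is an injective group homomorphism
`ι : PGL (n+1) K̄ → GL (m+1) K̄` which is equivariant for the entrywise Galois
actions of `Gal(K̄/K)`. -/
theorem stmt0 (K : Type*) [Field K] [PerfectField K] (n : ℕ) (hn : 1 ≤ n) :
    ∃ ι : (GL (Fin (n + 1)) (AlgebraicClosure K) ⧸
            Subgroup.center (GL (Fin (n + 1)) (AlgebraicClosure K))) →*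
          GL (Fin ((2 * n + 1).choose n - 1 + 1)) (AlgebraicClosure K),
      Function.Injective ι ∧
        ∀ (σ : AlgebraicClosure K ≃ₐ[K] AlgebraicClosure K)
          (g : GL (Fin (n + 1)) (AlgebraicClosure K)),
          ι (QuotientGroup.mk (galGL (n + 1) σ.toRingEquiv g)) =
            galGL ((2 * n + 1).choose n - 1 + 1) σ.toRingEquiv
              (ι (QuotientGroup.mk g)) :=
  stmt0_general K n
end

section
/- Let K be a field and n ≥ 1. Index the homogeneous coordinates ω_α of ℙ^m, m = binomial(2n+1,n) − 1, by the exponent vectors α = (α_0,…,α_n) of nonnegative integers with α_0+⋯+α_n = n+1, and let e_i denote the i-th standard exponent vector. Then a point (ω_α)_α ∈ ℙ^m(K) lies in the image of the Veronese map V_n : ℙ^n(K) → ℙ^m(K) if and only if both of the following hold: (1) for every k ∈ {0,…,n} and every exponent vector α = (α_0,…,α_n), ω_α · (ω_{(n+1)e_k})^n = ∏_{i=0}^{n} (ω_{e_i + n e_k})^{α_i}; and (2) ω_{(n+1)e_k} ≠ 0 for at least one k ∈ {0,…,n}. -/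
/-!
If `ω = c · V(x)`, every coordinate is `c` times a monomial, so `ω_{(n+1)eₖ} = c xₖⁿ⁺¹` and
`ω_{eᵢ+neₖ} = c xᵢ xₖⁿ`, and both sides of (1) equal `cⁿ⁺¹ xᵅ xₖ^{n(n+1)}`.
Conversely, if `w = ω_{(n+1)eₖ} ≠ 0`, relation (1) for this `k` says exactly that `ω` is
`w⁻ⁿ` times the Veronese image of `x = (ω_{eᵢ+neₖ})ᵢ`, and `x ≠ 0` because `xₖ = w`.
-/

theorem ite_add_ite_self {ι : Type*} [DecidableEq ι] (k : ι) (n : ℕ) :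
    (fun j => (if j = k then 1 else 0) + if j = k then n else 0) =
      fun j => if j = k then n + 1 else 0 := by
  funext j
  split_ifs <;> omega

section

open Finset

variable {ι : Type*} [Fintype ι] [DecidableEq ι]

def IsScaledVeronese {M : Type*} [CommMonoid M] (ω : (ι → ℕ) → M) (c : M) (x : ι → M)
    (d : ℕ) : Prop :=
  ∀ α : ι → ℕ, ∑ i, α i = d → ω α = c * ∏ i, x i ^ α i

theorem prod_pow_ite_eq {M : Type*} [CommMonoid M] (x : ι → M) (k : ι) (d : ℕ) :
    ∏ j, x j ^ (if j = k then d else 0) = x k ^ d := by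
  simp [pow_ite]

theorem prod_pow_ite_add_ite {M : Type*} [CommMonoid M] (x : ι → M) (i k : ι) (a b : ℕ) :
    ∏ j, x j ^ ((if j = i then a else 0) + if j = k then b else 0) = x i ^ a * x k ^ b := by
  simp only [pow_add, prod_mul_distrib, prod_pow_ite_eq]

namespace IsScaledVeronese

variable {M : Type*} [CommMonoid M] {ω : (ι → ℕ) → M} {c : M} {x : ι → M} {n : ℕ}

theorem apply_pure (h : IsScaledVeronese ω c x (n + 1)) (k : ι) :
    ω (fun j => if j = k then n + 1 else 0) = c * x k ^ (n + 1) := by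
  rw [h _ (by simp), prod_pow_ite_eq]

theorem apply_mixed (h : IsScaledVeronese ω c x (n + 1)) (i k : ι) :
    ω (fun j => (if j = i then 1 else 0) + if j = k then n else 0) = c * (x i * x k ^ n) := by
  rw [h _ (by simp [sum_add_distrib, add_comm]), prod_pow_ite_add_ite, pow_one]

theorem relation (h : IsScaledVeronese ω c x (n + 1)) (k : ι) (α : ι → ℕ)
    (hα : ∑ i, α i = n + 1) :
    ω α * ω (fun j => if j = k then n + 1 else 0) ^ n =
      ∏ i, ω (fun j => (if j = i then 1 else 0) + if j = k then n else 0) ^ α i := by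
  simp only [h α hα, h.apply_pure, h.apply_mixed, mul_pow, prod_mul_distrib,
    prod_pow_eq_pow_sum, ← mul_sum, hα, ← pow_mul]
  rw [pow_succ']
  ac_rfl

end IsScaledVeronese

theorem isScaledVeronese_of_relation {K : Type*} [Field K] {ω : (ι → ℕ) → K} {n : ℕ} {k : ι}
    (hrel : ∀ α : ι → ℕ, ∑ i, α i = n + 1 →
      ω α * ω (fun j => if j = k then n + 1 else 0) ^ n =
        ∏ i, ω (fun j => (if j = i then 1 else 0) + if j = k then n else 0) ^ α i)
    (hk : ω (fun j => if j = k then n + 1 else 0) ≠ 0) :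
    IsScaledVeronese ω (ω (fun j => if j = k then n + 1 else 0) ^ n)⁻¹
      (fun i => ω (fun j => (if j = i then 1 else 0) + if j = k then n else 0)) (n + 1) := by
  intro α hα
  rw [← hrel α hα]
  field_simp

end

theorem stmt2_general {K : Type*} [Field K] (n : ℕ)
    (ω : (Fin (n + 1) → ℕ) → K) :
    (∃ x : Fin (n + 1) → K, x ≠ 0 ∧ ∃ c : K, c ≠ 0 ∧
        ∀ α : Fin (n + 1) → ℕ, (∑ i, α i = n + 1) → ω α = c * ∏ i, x i ^ α i) ↔
      ((∀ (k : Fin (n + 1)) (α : Fin (n + 1) → ℕ), (∑ i, α i = n + 1) →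
          ω α * ω (fun j => if j = k then n + 1 else 0) ^ n =
            ∏ i, ω (fun j => (if j = i then 1 else 0) + if j = k then n else 0) ^ α i) ∧
        ∃ k : Fin (n + 1), ω (fun j => if j = k then n + 1 else 0) ≠ 0) := by
  constructor
  · rintro ⟨x, hx, c, hc, h⟩
    obtain ⟨k, hk⟩ := Function.ne_iff.mp hx
    have hpure : ω (fun j => if j = k then n + 1 else 0) ≠ 0 := by
      rw [IsScaledVeronese.apply_pure h]
      exact mul_ne_zero hc (pow_ne_zero _ hk)
    exact ⟨IsScaledVeronese.relation h, k, hpure⟩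
  · rintro ⟨hrel, k, hk⟩
    have hx : (fun i => ω (fun j => (if j = i then 1 else 0) + if j = k then n else 0)) ≠ 0 :=
      Function.ne_iff.mpr ⟨k, by rwa [ite_add_ite_self]⟩
    exact ⟨_, hx, _, inv_ne_zero (pow_ne_zero n hk), isScaledVeronese_of_relation (hrel k) hk⟩

/-- a point `(ω_α)_α` of `ℙ^m(K)` (coordinates indexed by the exponent
vectors `α` with `α₀ + ⋯ + α_n = n+1`, given as a not-identically-zero family) lies
in the image of the Veronese map `V_n : ℙ^n(K) → ℙ^m(K)` if and only if
(1) `ω_α · ω_{(n+1)eₖ}ⁿ = ∏ᵢ ω_{eᵢ + n eₖ}^{αᵢ}` for all `k` and all `α`, and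
(2) `ω_{(n+1)eₖ} ≠ 0` for some `k`. -/
theorem stmt2 {K : Type*} [Field K] (n : ℕ) (hn : 1 ≤ n)
    (ω : (Fin (n + 1) → ℕ) → K)
    (hω : ∃ α : Fin (n + 1) → ℕ, (∑ i, α i = n + 1) ∧ ω α ≠ 0) :
    (∃ x : Fin (n + 1) → K, x ≠ 0 ∧ ∃ c : K, c ≠ 0 ∧
        ∀ α : Fin (n + 1) → ℕ, (∑ i, α i = n + 1) → ω α = c * ∏ i, x i ^ α i) ↔
      ((∀ (k : Fin (n + 1)) (α : Fin (n + 1) → ℕ), (∑ i, α i = n + 1) →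
          ω α * ω (fun j => if j = k then n + 1 else 0) ^ n =
            ∏ i, ω (fun j => (if j = i then 1 else 0) + if j = k then n else 0) ^ α i) ∧
        ∃ k : Fin (n + 1), ω (fun j => if j = k then n + 1 else 0) ≠ 0) :=
  stmt2_general n ω
end

section
/- Let K be a field. A point (ω₀ : ω₁ : … : ω₉) ∈ ℙ⁹(K) lies in the image of the degree-3 Veronese map V₂ : ℙ²(K) → ℙ⁹(K), (x:y:z) ↦ (x³ : x²y : x²z : xy² : xyz : xz² : y³ : y²z : yz² : z³), if and only if (ω₀, ω₆, ω₉) ≠ (0,0,0) and the following 21 equations hold: ω₀ω₉² = ω₅³, ω₁ω₉² = ω₅²ω₈, ω₂ω₉² = ω₅²ω₉, ω₃ω₉² = ω₅ω₈², ω₄ω₉² = ω₅ω₈ω₉, ω₆ω₉² = ω₈³, ω₇ω₉² = ω₈²ω₉; ω₀ω₆² = ω₃³, ω₁ω₆² = ω₃²ω₆, ω₂ω₆² = ω₃²ω₇, ω₄ω₆² = ω₃ω₆ω₇, ω₅ω₆² = ω₃ω₇², ω₈ω₆² = ω₆ω₇², ω₉ω₆² = ω₇³; ω₃ω₀² = ω₀ω₁²,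 ω₄ω₀² = ω₀ω₁ω₂, ω₅ω₀² = ω₀ω₂², ω₆ω₀² = ω₁³, ω₇ω₀² = ω₁²ω₂, ω₈ω₀² = ω₁ω₂², ω₉ω₀² = ω₂³. -/
/-! On the affine chart `ω₀ ≠ 0` the point is the image of `(ω₀ : ω₁ : ω₂)`: the seven equations
with `ω₀²` on the left say exactly that every coordinate equals `ω₀⁻²` times the corresponding
monomial in `ω₀, ω₁, ω₂`. The charts `ω₆ ≠ 0` and `ω₉ ≠ 0` work the same way with the preimages
`(ω₃ : ω₆ : ω₇)` and `(ω₅ : ω₈ : ω₉)`, and these three charts cover the locus where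
`(ω₀, ω₆, ω₉) ≠ 0`. Conversely, the cubes `x³, y³, z³` of a nonzero point cannot all vanish. -/

section

variable {K : Type*} [Field K]

def InVeroneseImage (ω0 ω1 ω2 ω3 ω4 ω5 ω6 ω7 ω8 ω9 : K) : Prop :=
  ∃ x y z c : K, ¬(x = 0 ∧ y = 0 ∧ z = 0) ∧ c ≠ 0 ∧
    ω0 = c * x ^ 3 ∧ ω1 = c * (x ^ 2 * y) ∧ ω2 = c * (x ^ 2 * z) ∧
    ω3 = c * (x * y ^ 2) ∧ ω4 = c * (x * y * z) ∧ ω5 = c * (x * z ^ 2) ∧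
    ω6 = c * y ^ 3 ∧ ω7 = c * (y ^ 2 * z) ∧ ω8 = c * (y * z ^ 2) ∧
    ω9 = c * z ^ 3

theorem not_cubes_eq_zero {x y z c : K} (hxyz : ¬(x = 0 ∧ y = 0 ∧ z = 0)) (hc : c ≠ 0) :
    ¬(c * x ^ 3 = 0 ∧ c * y ^ 3 = 0 ∧ c * z ^ 3 = 0) := by
  simpa [hc] using hxyz

variable {ω0 ω1 ω2 ω3 ω4 ω5 ω6 ω7 ω8 ω9 : K}

theorem inVeroneseImage_of_ω0_ne_zero (h0 : ω0 ≠ 0)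
    (h3 : ω3 * ω0 ^ 2 = ω0 * ω1 ^ 2) (h4 : ω4 * ω0 ^ 2 = ω0 * ω1 * ω2)
    (h5 : ω5 * ω0 ^ 2 = ω0 * ω2 ^ 2) (h6 : ω6 * ω0 ^ 2 = ω1 ^ 3)
    (h7 : ω7 * ω0 ^ 2 = ω1 ^ 2 * ω2) (h8 : ω8 * ω0 ^ 2 = ω1 * ω2 ^ 2)
    (h9 : ω9 * ω0 ^ 2 = ω2 ^ 3) :
    InVeroneseImage ω0 ω1 ω2 ω3 ω4 ω5 ω6 ω7 ω8 ω9 := by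
  have hsq : ω0 ^ 2 ≠ 0 := pow_ne_zero 2 h0
  refine ⟨ω0, ω1, ω2, (ω0 ^ 2)⁻¹, fun h => h0 h.1, inv_ne_zero hsq,
    ?_, ?_, ?_, ?_, ?_, ?_, ?_, ?_, ?_, ?_⟩ <;> apply (eq_inv_mul_iff_mul_eq₀ hsq).mpr
  · ring
  · ring
  · ring
  · linear_combination h3
  · linear_combination h4
  · linear_combination h5
  · linear_combination h6
  · linear_combination h7
  · linear_combination h8
  · linear_combination h9

theorem inVeroneseImage_of_ω6_ne_zero (h6 : ω6 ≠ 0)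
    (h0 : ω0 * ω6 ^ 2 = ω3 ^ 3) (h1 : ω1 * ω6 ^ 2 = ω3 ^ 2 * ω6)
    (h2 : ω2 * ω6 ^ 2 = ω3 ^ 2 * ω7) (h4 : ω4 * ω6 ^ 2 = ω3 * ω6 * ω7)
    (h5 : ω5 * ω6 ^ 2 = ω3 * ω7 ^ 2) (h8 : ω8 * ω6 ^ 2 = ω6 * ω7 ^ 2)
    (h9 : ω9 * ω6 ^ 2 = ω7 ^ 3) :
    InVeroneseImage ω0 ω1 ω2 ω3 ω4 ω5 ω6 ω7 ω8 ω9 := by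
  have hsq : ω6 ^ 2 ≠ 0 := pow_ne_zero 2 h6
  refine ⟨ω3, ω6, ω7, (ω6 ^ 2)⁻¹, fun h => h6 h.2.1, inv_ne_zero hsq,
    ?_, ?_, ?_, ?_, ?_, ?_, ?_, ?_, ?_, ?_⟩ <;> apply (eq_inv_mul_iff_mul_eq₀ hsq).mpr
  · linear_combination h0
  · linear_combination h1
  · linear_combination h2
  · ring
  · linear_combination h4
  · linear_combination h5
  · ring
  · ring
  · linear_combination h8
  · linear_combination h9

theorem inVeroneseImage_of_ω9_ne_zero (h9 : ω9 ≠ 0)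
    (h0 : ω0 * ω9 ^ 2 = ω5 ^ 3) (h1 : ω1 * ω9 ^ 2 = ω5 ^ 2 * ω8)
    (h2 : ω2 * ω9 ^ 2 = ω5 ^ 2 * ω9) (h3 : ω3 * ω9 ^ 2 = ω5 * ω8 ^ 2)
    (h4 : ω4 * ω9 ^ 2 = ω5 * ω8 * ω9) (h6 : ω6 * ω9 ^ 2 = ω8 ^ 3)
    (h7 : ω7 * ω9 ^ 2 = ω8 ^ 2 * ω9) :
    InVeroneseImage ω0 ω1 ω2 ω3 ω4 ω5 ω6 ω7 ω8 ω9 := by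
  have hsq : ω9 ^ 2 ≠ 0 := pow_ne_zero 2 h9
  refine ⟨ω5, ω8, ω9, (ω9 ^ 2)⁻¹, fun h => h9 h.2.2, inv_ne_zero hsq,
    ?_, ?_, ?_, ?_, ?_, ?_, ?_, ?_, ?_, ?_⟩ <;> apply (eq_inv_mul_iff_mul_eq₀ hsq).mpr
  · linear_combination h0
  · linear_combination h1
  · linear_combination h2
  · linear_combination h3
  · linear_combination h4
  · ring
  · linear_combination h6
  · linear_combination h7
  · ring
  · ring

end

theorem stmt4_general {K : Type*} [Field K] (ω0 ω1 ω2 ω3 ω4 ω5 ω6 ω7 ω8 ω9 : K) :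
    (∃ x y z c : K, ¬(x = 0 ∧ y = 0 ∧ z = 0) ∧ c ≠ 0 ∧
        ω0 = c * x ^ 3 ∧ ω1 = c * (x ^ 2 * y) ∧ ω2 = c * (x ^ 2 * z) ∧
        ω3 = c * (x * y ^ 2) ∧ ω4 = c * (x * y * z) ∧ ω5 = c * (x * z ^ 2) ∧
        ω6 = c * y ^ 3 ∧ ω7 = c * (y ^ 2 * z) ∧ ω8 = c * (y * z ^ 2) ∧
        ω9 = c * z ^ 3) ↔
      (¬(ω0 = 0 ∧ ω6 = 0 ∧ ω9 = 0) ∧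
        ω0 * ω9 ^ 2 = ω5 ^ 3 ∧
        ω1 * ω9 ^ 2 = ω5 ^ 2 * ω8 ∧
        ω2 * ω9 ^ 2 = ω5 ^ 2 * ω9 ∧
        ω3 * ω9 ^ 2 = ω5 * ω8 ^ 2 ∧
        ω4 * ω9 ^ 2 = ω5 * ω8 * ω9 ∧
        ω6 * ω9 ^ 2 = ω8 ^ 3 ∧
        ω7 * ω9 ^ 2 = ω8 ^ 2 * ω9 ∧
        ω0 * ω6 ^ 2 = ω3 ^ 3 ∧
        ω1 * ω6 ^ 2 = ω3 ^ 2 * ω6 ∧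
        ω2 * ω6 ^ 2 = ω3 ^ 2 * ω7 ∧
        ω4 * ω6 ^ 2 = ω3 * ω6 * ω7 ∧
        ω5 * ω6 ^ 2 = ω3 * ω7 ^ 2 ∧
        ω8 * ω6 ^ 2 = ω6 * ω7 ^ 2 ∧
        ω9 * ω6 ^ 2 = ω7 ^ 3 ∧
        ω3 * ω0 ^ 2 = ω0 * ω1 ^ 2 ∧
        ω4 * ω0 ^ 2 = ω0 * ω1 * ω2 ∧
        ω5 * ω0 ^ 2 = ω0 * ω2 ^ 2 ∧
        ω6 * ω0 ^ 2 = ω1 ^ 3 ∧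
        ω7 * ω0 ^ 2 = ω1 ^ 2 * ω2 ∧
        ω8 * ω0 ^ 2 = ω1 * ω2 ^ 2 ∧
        ω9 * ω0 ^ 2 = ω2 ^ 3) := by
  constructor
  · rintro ⟨x, y, z, c, hxyz, hc, rfl, rfl, rfl, rfl, rfl, rfl, rfl, rfl, rfl, rfl⟩
    refine ⟨not_cubes_eq_zero hxyz hc, ?_⟩
    repeat' apply And.intro
    all_goals ring
  · rintro ⟨hne, q1, q2, q3, q4, q5, q6, q7, q8, q9, q10, q11, q12, q13, q14,
      q15, q16, q17, q18, q19, q20, q21⟩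
    obtain h0 | h6 | h9 : ω0 ≠ 0 ∨ ω6 ≠ 0 ∨ ω9 ≠ 0 := by tauto
    · exact inVeroneseImage_of_ω0_ne_zero h0 q15 q16 q17 q18 q19 q20 q21
    · exact inVeroneseImage_of_ω6_ne_zero h6 q8 q9 q10 q11 q12 q13 q14
    · exact inVeroneseImage_of_ω9_ne_zero h9 q1 q2 q3 q4 q5 q6 q7

/-- a point `(ω₀ : … : ω₉) ∈ ℙ⁹(K)` lies in the image of the degree-3
Veronese map `V₂ : (x:y:z) ↦ (x³ : x²y : x²z : xy² : xyz : xz² : y³ : y²z : yz² : z³)`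
iff `(ω₀, ω₆, ω₉) ≠ (0,0,0)` and the 21 listed equations hold. -/
theorem stmt4 {K : Type*} [Field K] (ω0 ω1 ω2 ω3 ω4 ω5 ω6 ω7 ω8 ω9 : K)
    (hω : ¬(ω0 = 0 ∧ ω1 = 0 ∧ ω2 = 0 ∧ ω3 = 0 ∧ ω4 = 0 ∧
            ω5 = 0 ∧ ω6 = 0 ∧ ω7 = 0 ∧ ω8 = 0 ∧ ω9 = 0)) :
    (∃ x y z c : K, ¬(x = 0 ∧ y = 0 ∧ z = 0) ∧ c ≠ 0 ∧
        ω0 = c * x ^ 3 ∧ ω1 = c * (x ^ 2 * y) ∧ ω2 = c * (x ^ 2 * z) ∧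
        ω3 = c * (x * y ^ 2) ∧ ω4 = c * (x * y * z) ∧ ω5 = c * (x * z ^ 2) ∧
        ω6 = c * y ^ 3 ∧ ω7 = c * (y ^ 2 * z) ∧ ω8 = c * (y * z ^ 2) ∧
        ω9 = c * z ^ 3) ↔
      (¬(ω0 = 0 ∧ ω6 = 0 ∧ ω9 = 0) ∧
        ω0 * ω9 ^ 2 = ω5 ^ 3 ∧
        ω1 * ω9 ^ 2 = ω5 ^ 2 * ω8 ∧
        ω2 * ω9 ^ 2 = ω5 ^ 2 * ω9 ∧
        ω3 * ω9 ^ 2 = ω5 * ω8 ^ 2 ∧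
        ω4 * ω9 ^ 2 = ω5 * ω8 * ω9 ∧
        ω6 * ω9 ^ 2 = ω8 ^ 3 ∧
        ω7 * ω9 ^ 2 = ω8 ^ 2 * ω9 ∧
        ω0 * ω6 ^ 2 = ω3 ^ 3 ∧
        ω1 * ω6 ^ 2 = ω3 ^ 2 * ω6 ∧
        ω2 * ω6 ^ 2 = ω3 ^ 2 * ω7 ∧
        ω4 * ω6 ^ 2 = ω3 * ω6 * ω7 ∧
        ω5 * ω6 ^ 2 = ω3 * ω7 ^ 2 ∧
        ω8 * ω6 ^ 2 = ω6 * ω7 ^ 2 ∧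
        ω9 * ω6 ^ 2 = ω7 ^ 3 ∧
        ω3 * ω0 ^ 2 = ω0 * ω1 ^ 2 ∧
        ω4 * ω0 ^ 2 = ω0 * ω1 * ω2 ∧
        ω5 * ω0 ^ 2 = ω0 * ω2 ^ 2 ∧
        ω6 * ω0 ^ 2 = ω1 ^ 3 ∧
        ω7 * ω0 ^ 2 = ω1 ^ 2 * ω2 ∧
        ω8 * ω0 ^ 2 = ω1 * ω2 ^ 2 ∧
        ω9 * ω0 ^ 2 = ω2 ^ 3) :=
  stmt4_general ω0 ω1 ω2 ω3 ω4 ω5 ω6 ω7 ω8 ω9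
end

section
/- Let L/K be a Galois extension of fields of degree 3 with Galois group generated by σ, let l₁ ∈ L, l₂ = σ(l₁), l₃ = σ(l₂) (so σ(l₃) = l₁), and let α ∈ K×. Let M_α be the 10×10 matrix over K whose only nonzero entries are M_α[0,6] = α⁻¹, M_α[1,7] = α⁻¹, M_α[2,3] = 1, M_α[3,8] = α⁻¹, M_α[4,4] = 1, M_α[5,1] = α, M_α[6,9] = α⁻¹, M_α[7,5] = 1, M_α[8,2] = α, M_α[9,0] = α². Let φ be the 10×10 matrix over L (rows and columns indexed 0 through 9) whose only nonzero entries are: row 0: φ[0,0]=l₁, φ[0,6]=l₂, φ[0,9]=l₃; row 1: φ[1,1]=l₁, φ[1,5]=l₂, φ[1,7]=l₃; row 2: φ[2,2]=l₁, φ[2,3]=l₂, φ[2,8]=l₃; row 3: φ[3,2]=l₃, φ[3,3]=l₁, φ[3,8]=l₂; row 4: φ[4,4]=1; row 5: φ[5,1]=αl₂, φ[5,5]=αl₃, φ[5,7]=αl₁; row 6: φ[6,0]=αl₃, φ[6,6]=αl₁, φ[6,9]=αl₂; row 7: φ[7,1]=αl₃, φ[7,5]=αl₁, φ[7,7]=αl₂;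 row 8: φ[8,2]=αl₂, φ[8,3]=αl₃, φ[8,8]=αl₁; row 9: φ[9,0]=α²l₂, φ[9,6]=α²l₃, φ[9,9]=α²l₁. Then M_α · σ(φ) = φ, where σ(φ) denotes σ applied to each entry of φ. Moreover, if {l₁, l₂, l₃} is a K-basis of L, then φ is invertible and M_α = φ · (σ(φ))⁻¹. -/
open Matrix

/-- The 10×10 matrix `M_α` (entries in `K`, viewed inside `L`). -/
def Mmat (K : Type*) {L : Type*} [Field K] [Field L] [Algebra K L] (α : K) :
    Matrix (Fin 10) (Fin 10) L :=
  Matrix.of fun i j =>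
    if i = 0 ∧ j = 6 then (algebraMap K L α)⁻¹ else
    if i = 1 ∧ j = 7 then (algebraMap K L α)⁻¹ else
    if i = 2 ∧ j = 3 then 1 else
    if i = 3 ∧ j = 8 then (algebraMap K L α)⁻¹ else
    if i = 4 ∧ j = 4 then 1 else
    if i = 5 ∧ j = 1 then algebraMap K L α else
    if i = 6 ∧ j = 9 then (algebraMap K L α)⁻¹ else
    if i = 7 ∧ j = 5 then 1 else
    if i = 8 ∧ j = 2 then algebraMap K L α else
    if i = 9 ∧ j = 0 then algebraMap K L α ^ 2 else 0

/-- The splitting matrix `φ` of Lemma 5.1. -/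
def phiMat (K : Type*) {L : Type*} [Field K] [Field L] [Algebra K L]
    (α : K) (l₁ l₂ l₃ : L) : Matrix (Fin 10) (Fin 10) L :=
  let a : L := algebraMap K L α
  Matrix.of fun i j =>
    if i = 0 ∧ j = 0 then l₁ else
    if i = 0 ∧ j = 6 then l₂ else
    if i = 0 ∧ j = 9 then l₃ else
    if i = 1 ∧ j = 1 then l₁ else
    if i = 1 ∧ j = 5 then l₂ else
    if i = 1 ∧ j = 7 then l₃ else
    if i = 2 ∧ j = 2 then l₁ else
    if i = 2 ∧ j = 3 then l₂ else
    if i = 2 ∧ j = 8 then l₃ else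
    if i = 3 ∧ j = 2 then l₃ else
    if i = 3 ∧ j = 3 then l₁ else
    if i = 3 ∧ j = 8 then l₂ else
    if i = 4 ∧ j = 4 then 1 else
    if i = 5 ∧ j = 1 then a * l₂ else
    if i = 5 ∧ j = 5 then a * l₃ else
    if i = 5 ∧ j = 7 then a * l₁ else
    if i = 6 ∧ j = 0 then a * l₃ else
    if i = 6 ∧ j = 6 then a * l₁ else
    if i = 6 ∧ j = 9 then a * l₂ else
    if i = 7 ∧ j = 1 then a * l₃ else
    if i = 7 ∧ j = 5 then a * l₁ else
    if i = 7 ∧ j = 7 then a * l₂ else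
    if i = 8 ∧ j = 2 then a * l₂ else
    if i = 8 ∧ j = 3 then a * l₃ else
    if i = 8 ∧ j = 8 then a * l₁ else
    if i = 9 ∧ j = 0 then a ^ 2 * l₂ else
    if i = 9 ∧ j = 6 then a ^ 2 * l₃ else
    if i = 9 ∧ j = 9 then a ^ 2 * l₁ else 0

/-!
`M_α` is monomial, so each row of `M_α · σ(φ)` is a scalar multiple of `σ` applied to one row of
`φ`, and the identity `M_α · σ(φ) = φ` is an entrywise check. For invertibility, `φ` is block
diagonal up to a permutation of the indices: besides the entry `1` at `4`, the blocks on
`{0, 6, 9}`, `{1, 5, 7}` and `{2, 3, 8}` have as rows, up to powers of `α`, the rows of the matrix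
`(σⁱ(lⱼ))`. That matrix is nonsingular by Dedekind's independence of the characters `1, σ, σ²`,
which are distinct because `l₁, l₂, l₃` are.
-/

theorem Mmat_mul_apply {K L : Type*} [Field K] [Field L] [Algebra K L] (α : K)
    (X : Matrix (Fin 10) (Fin 10) L) (i j : Fin 10) :
    (Mmat K (L := L) α * X) i j =
      ![(algebraMap K L α)⁻¹, (algebraMap K L α)⁻¹, 1, (algebraMap K L α)⁻¹, 1, algebraMap K L α,
        (algebraMap K L α)⁻¹, 1, algebraMap K L α, algebraMap K L α ^ 2] i *
        X (![6, 7, 3, 8, 4, 1, 9, 5, 2, 0] i) j := by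
  fin_cases i <;> simp [mul_apply, Mmat]

theorem Mmat_mul_map_phiMat {K L : Type*} [Field K] [Field L] [Algebra K L]
    (σ : L →ₐ[K] L) (l₁ l₂ l₃ : L) (hl₂ : l₂ = σ l₁) (hl₃ : l₃ = σ l₂) (hl₁ : σ l₃ = l₁)
    (α : K) (ha : algebraMap K L α ≠ 0) :
    Mmat K α * (phiMat K α l₁ l₂ l₃).map σ = phiMat K α l₁ l₂ l₃ := by
  ext i j
  rw [Mmat_mul_apply]
  fin_cases i <;> fin_cases j <;> simp [phiMat, ← hl₂, ← hl₃, hl₁] <;> field_simp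

theorem det_algHom_apply_basis_ne_zero {K L E ι : Type*} [Field K] [Field L] [Field E]
    [Algebra K L] [Algebra K E] [Fintype ι] [DecidableEq ι]
    (f : ι → L →ₐ[K] E) (hf : Function.Injective f) (b : Module.Basis ι K L) :
    (of fun i j => f i (b j)).det ≠ 0 := by
  intro h
  obtain ⟨v, hv0, hv⟩ := exists_vecMul_eq_zero_iff.mpr h
  have hlin : ∑ i, v i • (f i).toLinearMap = 0 := b.ext fun j => by
    simpa [vecMul, dotProduct] using congrFun hv j
  have hind := (linearIndependent_monoidHom L E).comp (fun i => (f i : L →* E))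
    fun i j hij => hf (AlgHom.ext fun x => DFunLike.congr_fun hij x)
  refine hv0 (funext (Fintype.linearIndependent_iff.mp hind v ?_))
  funext x
  simpa using LinearMap.congr_fun hlin x

theorem det_cyclic_basis_ne_zero {K L : Type*} [Field K] [Field L] [Algebra K L]
    (σ : L →ₐ[K] L) (b : Module.Basis (Fin 3) K L)
    (h₁ : σ (b 0) = b 1) (h₂ : σ (b 1) = b 2) (h₀ : σ (b 2) = b 0) :
    !![b 0, b 1, b 2; b 1, b 2, b 0; b 2, b 0, b 1].det ≠ 0 := by
  let f : Fin 3 → L →ₐ[K] L := ![AlgHom.id K L, σ, σ.comp σ]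
  have hf : ∀ k, f k (b 0) = b k := by
    intro k; fin_cases k <;> simp [f, h₁, h₂]
  convert det_algHom_apply_basis_ne_zero f
    (fun i j hij => b.injective (by rw [← hf i, ← hf j, hij])) b using 2
  ext i j; fin_cases i <;> fin_cases j <;> simp [f, h₀, h₁, h₂]

theorem eq_zero_of_cyclic_eqs {L : Type*} [Field L] {l₁ l₂ l₃ x y z : L}
    (hC : !![l₁, l₂, l₃; l₂, l₃, l₁; l₃, l₁, l₂].det ≠ 0)
    (h₁ : l₁ * x + l₂ * y + l₃ * z = 0) (h₂ : l₂ * x + l₃ * y + l₁ * z = 0)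
    (h₃ : l₃ * x + l₁ * y + l₂ * z = 0) : x = 0 ∧ y = 0 ∧ z = 0 := by
  have := eq_zero_of_mulVec_eq_zero hC (v := ![x, y, z]) (by
    ext i; fin_cases i <;> simp [mulVec, dotProduct, Fin.sum_univ_three, h₁, h₂, h₃])
  exact ⟨congrFun this 0, congrFun this 1, congrFun this 2⟩

theorem isUnit_phiMat {K L : Type*} [Field K] [Field L] [Algebra K L] (α : K) (l₁ l₂ l₃ : L)
    (ha : algebraMap K L α ≠ 0) (hC : !![l₁, l₂, l₃; l₂, l₃, l₁; l₃, l₁, l₂].det ≠ 0) :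
    IsUnit (phiMat K α l₁ l₂ l₃) := by
  rw [isUnit_iff_isUnit_det, isUnit_iff_ne_zero, Ne, ← exists_mulVec_eq_zero_iff]
  rintro ⟨v, hv0, hv⟩
  have hrows := fun i => congrFun hv i
  simp only [mulVec, dotProduct, phiMat, Fin.isValue, of_apply, ite_mul, one_mul, zero_mul,
    Fin.sum_univ_succ, and_true, Fin.reduceEq, and_false, ↓reduceIte, zero_ne_one,
    Fin.succ_ne_zero, Fin.succ_zero_eq_one, Fin.succ_one_eq_two, Fin.reduceSucc,
    Finset.univ_unique, Fin.default_eq_zero, Finset.sum_singleton, Pi.zero_apply,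
    Fin.forall_fin_succ, zero_add, add_zero, IsEmpty.forall_iff] at hrows
  obtain ⟨e0, e1, e2, e3, e4, e5, e6, e7, e8, e9⟩ := hrows
  obtain ⟨h0, h6, h9⟩ := eq_zero_of_cyclic_eqs (x := v 0) (y := v 6) (z := v 9) hC
    (by linear_combination e0)
    ((mul_eq_zero_iff_left (pow_ne_zero 2 ha)).mp (by linear_combination e9))
    ((mul_eq_zero_iff_left ha).mp (by linear_combination e6))
  obtain ⟨h1, h5, h7⟩ := eq_zero_of_cyclic_eqs (x := v 1) (y := v 5) (z := v 7) hC
    (by linear_combination e1) ((mul_eq_zero_iff_left ha).mp (by linear_combination e5))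
    ((mul_eq_zero_iff_left ha).mp (by linear_combination e7))
  obtain ⟨h2, h3, h8⟩ := eq_zero_of_cyclic_eqs (x := v 2) (y := v 3) (z := v 8) hC
    (by linear_combination e2) ((mul_eq_zero_iff_left ha).mp (by linear_combination e8))
    (by linear_combination e3)
  exact hv0 (funext fun i => by fin_cases i <;> assumption)

theorem stmt7_general {K L : Type*} [Field K] [Field L] [Algebra K L]
    (σ : L ≃ₐ[K] L)
    (l₁ l₂ l₃ : L) (hl₂ : l₂ = σ l₁) (hl₃ : l₃ = σ l₂) (hl₁ : σ l₃ = l₁)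
    (α : K) (hα : α ≠ 0) :
    Mmat K α * (phiMat K α l₁ l₂ l₃).map (fun t => σ t) = phiMat K α l₁ l₂ l₃ ∧
      ((∃ b : Module.Basis (Fin 3) K L, b 0 = l₁ ∧ b 1 = l₂ ∧ b 2 = l₃) →
        IsUnit (phiMat K α l₁ l₂ l₃) ∧
          Mmat K α =
            phiMat K α l₁ l₂ l₃ * ((phiMat K α l₁ l₂ l₃).map (fun t => σ t))⁻¹) := by
  have ha : algebraMap K L α ≠ 0 := (map_ne_zero _).mpr hα
  have hM : Mmat K α * (phiMat K α l₁ l₂ l₃).map (fun t => σ t) = phiMat K α l₁ l₂ l₃ :=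
    Mmat_mul_map_phiMat σ.toAlgHom l₁ l₂ l₃ hl₂ hl₃ hl₁ α ha
  refine ⟨hM, fun ⟨b, hb₀, hb₁, hb₂⟩ => ?_⟩
  have hC : !![l₁, l₂, l₃; l₂, l₃, l₁; l₃, l₁, l₂].det ≠ 0 := by
    subst hb₀ hb₁ hb₂
    exact det_cyclic_basis_ne_zero σ.toAlgHom b hl₂.symm hl₃.symm hl₁
  have hφ := isUnit_phiMat α l₁ l₂ l₃ ha hC
  have hσφ : IsUnit ((phiMat K α l₁ l₂ l₃).map (fun t => σ t)).det := by
    have := ((isUnit_iff_isUnit_det _).mp hφ).map σ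
    rw [AlgEquiv.map_det] at this
    exact this
  exact ⟨hφ, by rw [← mul_nonsing_inv_cancel_right _ (Mmat K α) hσφ, hM]⟩

/-- for a degree-3 Galois extension `L/K` with Galois group generated
by `σ`, with `l₂ = σ(l₁)`, `l₃ = σ(l₂)` (so `σ(l₃) = l₁`) and `α ∈ K×`, the matrix
`φ` satisfies `M_α · σ(φ) = φ`; moreover if `{l₁, l₂, l₃}` is a `K`-basis of `L`
then `φ` is invertible and `M_α = φ · (σ(φ))⁻¹`. -/
theorem stmt7 {K L : Type*} [Field K] [Field L] [Algebra K L] [IsGalois K L]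
    (hdeg : Module.finrank K L = 3)
    (σ : L ≃ₐ[K] L) (hσ : ∀ τ : L ≃ₐ[K] L, τ ∈ Subgroup.zpowers σ)
    (l₁ l₂ l₃ : L) (hl₂ : l₂ = σ l₁) (hl₃ : l₃ = σ l₂) (hl₁ : σ l₃ = l₁)
    (α : K) (hα : α ≠ 0) :
    Mmat K α * (phiMat K α l₁ l₂ l₃).map (fun t => σ t) = phiMat K α l₁ l₂ l₃ ∧
      ((∃ b : Module.Basis (Fin 3) K L, b 0 = l₁ ∧ b 1 = l₂ ∧ b 2 = l₃) →
        IsUnit (phiMat K α l₁ l₂ l₃) ∧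
          Mmat K α =
            phiMat K α l₁ l₂ l₃ * ((phiMat K α l₁ l₂ l₃).map (fun t => σ t))⁻¹) :=
  stmt7_general σ l₁ l₂ l₃ hl₂ hl₃ hl₁ α hα
end

section
/- Let A, B, C ∈ ℤ and let P(t) = t³ + At² + Bt + C. Assume P is irreducible over ℚ and that its splitting field L over ℚ has degree 3 (so L/ℚ is Galois with cyclic Galois group of order 3). Let t₁ ∈ L be a root of P. Then there exist integers α, β, γ, δ such that γt₁ + δ ≠ 0, the element t₂ = (αt₁ + β)/(γt₁ + δ) is a root of P distinct from t₁, γt₂ + δ ≠ 0, and t₃ = (αt₂ + β)/(γt₂ + δ) is a root of P distinct from both t₁ and t₂. -/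
/-!
`L` is Galois over `ℚ` with group of prime order 3, so a generator `σ` moves every irrational
element, and `t₁, σ t₁, σ² t₁` are the three roots of `P`. Since `[L : ℚ] = 3`, the four elements
`1, t₁, σ t₁, t₁ σ t₁` satisfy a nontrivial integer relation, which expresses `σ t₁` as an
integral Möbius transform `(α t₁ + β) / (γ t₁ + δ)`; applying `σ`, which fixes the integers,
gives `σ² t₁ = (α σ t₁ + β) / (γ σ t₁ + δ)`.
-/

open Polynomial

theorem Polynomial.notMem_range_algebraMap_of_irreducible {K L : Type*} [Field K] [Field L]
    [Algebra K L] {p : K[X]} (hirr : Irreducible p) (hdeg : p.natDegree ≠ 1) {x : L}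
    (hx : aeval x p = 0) : x ∉ Set.range (algebraMap K L) := by
  rw [← RingHom.coe_range, SetLike.mem_coe, ← minpoly.natDegree_eq_one_iff,
    ← minpoly.eq_of_irreducible hirr hx,
    natDegree_mul_C (inv_ne_zero (leadingCoeff_ne_zero.mpr hirr.ne_zero))]
  exact hdeg

theorem AlgEquiv.apply_ne_self_of_finrank_prime {K L : Type*} [Field K] [Field L] [Algebra K L]
    [FiniteDimensional K L] [IsGalois K L] (hp : (Module.finrank K L).Prime)
    {σ : L ≃ₐ[K] L} (hσ : σ ≠ 1) {x : L} (hx : x ∉ Set.range (algebraMap K L)) : σ x ≠ x := by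
  intro hσx
  have : Fact (Nat.card (L ≃ₐ[K] L)).Prime := ⟨IsGalois.card_aut_eq_finrank K L ▸ hp⟩
  have hstab : MulAction.stabilizer (L ≃ₐ[K] L) x = ⊤ :=
    (Subgroup.eq_bot_or_eq_top_of_prime_card _).resolve_left
      fun h ↦ hσ <| Subgroup.mem_bot.mp (h ▸ hσx)
  exact hx <| (IsGalois.mem_range_algebraMap_iff_fixed x).mpr
    fun τ ↦ MulAction.mem_stabilizer_iff.mp (hstab ▸ Subgroup.mem_top τ)

section

variable {L : Type*} [Field L] [Algebra ℚ L]

theorem int_eq_zero_of_intCast_mul_add_eq_zero {t : L} (ht : t ∉ Set.range (algebraMap ℚ L))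
    {γ δ : ℤ} (h : (γ : L) * t + δ = 0) : γ = 0 ∧ δ = 0 := by
  have : CharZero L := charZero_of_injective_algebraMap (algebraMap ℚ L).injective
  obtain rfl : γ = 0 := by
    by_contra hγ
    refine ht ⟨-δ / γ, ?_⟩
    rw [eq_comm, map_div₀, map_neg, map_intCast, map_intCast, eq_div_iff (by exact_mod_cast hγ)]
    linear_combination h
  simpa using h

theorem exists_int_moebius_of_finrank_le_three [FiniteDimensional ℚ L]
    (h3 : Module.finrank ℚ L ≤ 3) {t : L} (ht : t ∉ Set.range (algebraMap ℚ L)) (x : L) :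
    ∃ α β γ δ : ℤ, (γ : L) * t + δ ≠ 0 ∧ x = (α * t + β) / (γ * t + δ) := by
  have hdep : ¬ LinearIndependent ℤ ![1, t, x, x * t] := by
    rw [LinearIndependent.iff_fractionRing ℤ ℚ]
    intro h
    simpa using h.fintype_card_le_finrank.trans h3
  obtain ⟨g, hg, i, hi⟩ := Fintype.not_linearIndependent_iff.mp hdep
  simp only [Fin.sum_univ_four, Matrix.cons_val, zsmul_eq_mul, mul_one] at hg
  have hx : x * (g 3 * t + g 2) = -g 1 * t + -g 0 := by linear_combination hg
  have hden : (g 3 : L) * t + g 2 ≠ 0 := by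
    intro h0
    obtain ⟨h3, h2⟩ := int_eq_zero_of_intCast_mul_add_eq_zero ht h0
    obtain ⟨h1, h0⟩ := int_eq_zero_of_intCast_mul_add_eq_zero ht (γ := -g 1) (δ := -g 0)
      (by push_cast; rw [← hx, h0, mul_zero])
    fin_cases i <;> simp_all
  exact ⟨-g 1, -g 0, g 3, g 2, hden, by push_cast; rw [eq_div_iff hden, hx]⟩

end

/-- for an irreducible integral cubic `P = t³ + at² + bt + c` over `ℚ`
whose splitting field `L` has degree 3, and `t₁ ∈ L` a root of `P`, there are
integers `α, β, γ, δ` such that `t₂ = (αt₁+β)/(γt₁+δ)` and `t₃ = (αt₂+β)/(γt₂+δ)`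
are the other two (distinct) roots of `P`. -/
theorem stmt8 (a b c : ℤ) (P : ℚ[X])
    (hP : P = X ^ 3 + C (a : ℚ) * X ^ 2 + C (b : ℚ) * X + C (c : ℚ))
    (hirr : Irreducible P)
    (hdeg : Module.finrank ℚ P.SplittingField = 3)
    (t₁ : P.SplittingField) (ht₁ : aeval t₁ P = 0) :
    ∃ α β γ δ : ℤ, ∃ t₂ t₃ : P.SplittingField,
      (γ : P.SplittingField) * t₁ + (δ : P.SplittingField) ≠ 0 ∧
      t₂ = ((α : P.SplittingField) * t₁ + (β : P.SplittingField)) /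
             ((γ : P.SplittingField) * t₁ + (δ : P.SplittingField)) ∧
      aeval t₂ P = 0 ∧ t₂ ≠ t₁ ∧
      (γ : P.SplittingField) * t₂ + (δ : P.SplittingField) ≠ 0 ∧
      t₃ = ((α : P.SplittingField) * t₂ + (β : P.SplittingField)) /
             ((γ : P.SplittingField) * t₂ + (δ : P.SplittingField)) ∧
      aeval t₃ P = 0 ∧ t₃ ≠ t₁ ∧ t₃ ≠ t₂ := by
  -- Instance search picks `DivisionRing.toRatAlgebra` for `Algebra ℚ P.SplittingField`, not the
  -- splitting-field algebra, so normality has to be supplied by hand.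
  have : IsGalois ℚ P.SplittingField := { to_normal := SplittingField.instNormal P }
  have hP3 : P.natDegree = 3 := by rw [hP]; compute_degree!
  have ht₁ℚ : t₁ ∉ Set.range (algebraMap ℚ P.SplittingField) :=
    notMem_range_algebraMap_of_irreducible hirr (by omega) ht₁
  have hprime : (Module.finrank ℚ P.SplittingField).Prime := hdeg ▸ Nat.prime_three
  have : Fact (Nat.Prime 3) := ⟨Nat.prime_three⟩
  obtain ⟨σ, hσ⟩ := exists_prime_orderOf_dvd_card' (G := P.SplittingField ≃ₐ[ℚ] P.SplittingField)
    3 (by rw [IsGalois.card_aut_eq_finrank, hdeg])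
  have hσ1 : σ ≠ 1 := fun h ↦ by simp [h] at hσ
  have hσ2 : σ * σ ≠ 1 := by
    rw [← sq]
    exact pow_ne_one_of_lt_orderOf two_ne_zero (by rw [hσ]; norm_num)
  have hroot (x : P.SplittingField) (hx : aeval x P = 0) : aeval (σ x) P = 0 := by
    rw [aeval_algEquiv, AlgHom.comp_apply, hx, map_zero]
  obtain ⟨α, β, γ, δ, hden, hσt₁⟩ := exists_int_moebius_of_finrank_le_three hdeg.le ht₁ℚ (σ t₁)
  refine ⟨α, β, γ, δ, σ t₁, σ (σ t₁), hden, hσt₁, hroot _ ht₁,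
    σ.apply_ne_self_of_finrank_prime hprime hσ1 ht₁ℚ, ?_, ?_, hroot _ (hroot _ ht₁),
    (σ * σ).apply_ne_self_of_finrank_prime hprime hσ2 ht₁ℚ,
    σ.injective.ne (σ.apply_ne_self_of_finrank_prime hprime hσ1 ht₁ℚ)⟩
  · simpa using (map_ne_zero σ).mpr hden
  · conv_lhs => rw [hσt₁]
    simp
end

section
/- Let F be a field of characteristic 0, let B, C ∈ F, and let t₁, t₂, t₃ ∈ F be three distinct roots of t³ + Bt + C, i.e. t³ + Bt + C = (t − t₁)(t − t₂)(t − t₃). Suppose α, β, γ, δ ∈ F satisfy δ = −(α + 1), βγ = −(α² + α + 1), γ ≠ 0, and the Möbius relations γt₁t₂ + δt₂ − αt₁ − β = 0, γt₂t₃ + δt₃ − αt₂ − β = 0, γt₃t₁ + δt₁ − αt₃ − β = 0. Then B = 3β/γ and C = −β(2α + 1)/γ². -/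
/-!
Comparing coefficients gives `t₁ + t₂ + t₃ = 0`, `B = t₁t₂ + t₂t₃ + t₃t₁` and `C = -t₁t₂t₃`.
Adding the three Möbius relations gives `γB = 3β`; adding them after multiplying each by the
root it does not involve gives `3γ t₁t₂t₃ = (α - δ)B = (2α + 1)B`.
-/

section CubicFactor

variable {R : Type*} [CommRing R] {B C t₁ t₂ t₃ : R}
  (hroots : ∀ t : R, t ^ 3 + B * t + C = (t - t₁) * (t - t₂) * (t - t₃))
include hroots

theorem add_add_eq_zero_of_cubic_factor [NoZeroDivisors R] (h2 : (2 : R) ≠ 0) :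
    t₁ + t₂ + t₃ = 0 := by
  have h : 2 * (t₁ + t₂ + t₃) = 0 := by
    linear_combination hroots 1 + hroots (-1) - 2 * hroots 0
  exact (mul_eq_zero.mp h).resolve_left h2

theorem eq_sum_mul_of_cubic_factor (hsum : t₁ + t₂ + t₃ = 0) :
    B = t₁ * t₂ + t₂ * t₃ + t₃ * t₁ := by
  linear_combination hroots 1 - hroots 0 - hsum

theorem eq_neg_mul_of_cubic_factor : C = -(t₁ * t₂ * t₃) := by
  linear_combination hroots 0

end CubicFactor

section MobiusCycle

variable {R : Type*} [CommRing R] {α β γ δ t₁ t₂ t₃ : R}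
  (h₁ : γ * (t₁ * t₂) + δ * t₂ - α * t₁ - β = 0)
  (h₂ : γ * (t₂ * t₃) + δ * t₃ - α * t₂ - β = 0)
  (h₃ : γ * (t₃ * t₁) + δ * t₁ - α * t₃ - β = 0)
include h₁ h₂ h₃

theorem mobius_cycle_sum :
    γ * (t₁ * t₂ + t₂ * t₃ + t₃ * t₁) = (α - δ) * (t₁ + t₂ + t₃) + 3 * β := by
  linear_combination h₁ + h₂ + h₃

theorem mobius_cycle_weighted_sum :
    3 * γ * (t₁ * t₂ * t₃) = (α - δ) * (t₁ * t₂ + t₂ * t₃ + t₃ * t₁) + β * (t₁ + t₂ + t₃) := by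
  linear_combination t₃ * h₁ + t₁ * h₂ + t₂ * h₃

end MobiusCycle

theorem stmt10_general {F : Type*} [Field F] [CharZero F] (B C t₁ t₂ t₃ : F)
    (hroots : ∀ t : F, t ^ 3 + B * t + C = (t - t₁) * (t - t₂) * (t - t₃))
    (α β γ δ : F)
    (hδ : δ = -(α + 1)) (hγ : γ ≠ 0)
    (h₁ : γ * (t₁ * t₂) + δ * t₂ - α * t₁ - β = 0)
    (h₂ : γ * (t₂ * t₃) + δ * t₃ - α * t₂ - β = 0)
    (h₃ : γ * (t₃ * t₁) + δ * t₁ - α * t₃ - β = 0) :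
    B = 3 * β / γ ∧ C = -(β * (2 * α + 1)) / γ ^ 2 := by
  subst hδ
  have hsum := add_add_eq_zero_of_cubic_factor hroots two_ne_zero
  have hB := eq_sum_mul_of_cubic_factor hroots hsum
  have hC := eq_neg_mul_of_cubic_factor hroots
  have hBγ : B * γ = 3 * β := by
    linear_combination mobius_cycle_sum h₁ h₂ h₃ + γ * hB + (2 * α + 1) * hsum
  have hCγ : C * γ ^ 2 = -(β * (2 * α + 1)) := by
    refine mul_left_cancel₀ (three_ne_zero (α := F)) ?_
    linear_combination -γ * mobius_cycle_weighted_sum h₁ h₂ h₃ + 3 * γ ^ 2 * hC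
      + γ * (2 * α + 1) * hB - β * γ * hsum - (2 * α + 1) * hBγ
  exact ⟨(eq_div_iff hγ).mpr hBγ, (eq_div_iff (pow_ne_zero 2 hγ)).mpr hCγ⟩

/-- if `t³ + Bt + C = (t-t₁)(t-t₂)(t-t₃)` with `t₁, t₂, t₃` distinct,
and `α, β, γ, δ` satisfy `δ = -(α+1)`, `βγ = -(α²+α+1)`, `γ ≠ 0` and the Möbius
relations cyclically permuting the roots, then `B = 3β/γ` and `C = -β(2α+1)/γ²`. -/
theorem stmt10 {F : Type*} [Field F] [CharZero F] (B C t₁ t₂ t₃ : F)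
    (hd₁₂ : t₁ ≠ t₂) (hd₂₃ : t₂ ≠ t₃) (hd₁₃ : t₁ ≠ t₃)
    (hroots : ∀ t : F, t ^ 3 + B * t + C = (t - t₁) * (t - t₂) * (t - t₃))
    (α β γ δ : F)
    (hδ : δ = -(α + 1)) (hβγ : β * γ = -(α ^ 2 + α + 1)) (hγ : γ ≠ 0)
    (h₁ : γ * (t₁ * t₂) + δ * t₂ - α * t₁ - β = 0)
    (h₂ : γ * (t₂ * t₃) + δ * t₃ - α * t₂ - β = 0)
    (h₃ : γ * (t₃ * t₁) + δ * t₁ - α * t₃ - β = 0) :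
    B = 3 * β / γ ∧ C = -(β * (2 * α + 1)) / γ ^ 2 :=
  stmt10_general B C t₁ t₂ t₃ hroots α β γ δ hδ hγ h₁ h₂ h₃
end
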